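/- Let A, B, C be noncollinear points in the plane with a = dist B C, b = dist A C, c = dist A B satisfying a ≤ b ≤ c, and angles β = ∠ A B C, γ = ∠ B C A. For a point D with dist D B = dist D C set f(D) := max( 2·dist(B,D)/a , (dist(A,D) + dist(B,D))/b ). Suppose tan β > sin γ. Define φ* ∈ (0, π/2) by tan φ* = 2·√(c² − (b−a)²) / ( √((3b−a)² − c²) + √((b+a)² − c²) ) (all three radicands are positive for a nondegenerate triangle with a ≤ b ≤ c), and let D* be the point on the perpendicular bisector of B and C, on the same side of line BC as A, at distance (a/2)·tan φ* from the midpoint of B and C. Then f(D*) = 1/cos φ*, and f(D) ≥ 1/cos φ* for every point D equidistant from B and C. Hence the minimum of f over the perpendicular bisector of B and C equals 1/cos φ* and is attained at D*. -/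

import Mathlib

/-!
Put the midpoint `M` of `BC` at the origin with `BC` along the first axis, so that
`A = (d, y)` with `y > 0` and the perpendicular bisector of `BC` is `{(0, h)}`. For `D = (0, h)`
we have `|BD| = √(a²/4 + h²)` and `|AD| = √(d² + (y - h)²)`. With `t = tan φ*`, the positive root
of `b (b - a) t² + a y t = (c² - (b - a)²) / 2`, both terms of `f` equal `sec φ*` at `h* = a t / 2`.
For `h` with `|BD| ≥ |BD*|` the first term is at least `sec φ*`. Otherwise `h < h*`, and since
`h ↦ |AD| + |BD|` is convex with nonpositive slope at `h*` (that is `b t ≤ y`, which follows from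
`c² < 2ab + b² - a²`, the side-length form of `tan β > sin γ`), the second term is at least
`(|AD*| + |BD*|) / b = sec φ*`.
-/

open Real EuclideanGeometry
open scoped RealInnerProductSpace

theorem add_mul_le_sqrt_mul_sqrt {q : ℝ} (hq : 0 ≤ q) (x x' : ℝ) :
    q + x * x' ≤ √(q + x ^ 2) * √(q + x' ^ 2) := by
  rw [← sqrt_mul (by positivity)]
  exact (le_abs_self _).trans (abs_le_sqrt (by nlinarith [mul_nonneg hq (sq_nonneg (x - x'))]))

-- `hslope` says that the right-hand side, as a function of `h`, has nonpositive slope at `h₀`.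
theorem sqrt_add_sqrt_le_of_le {p q y h h₀ : ℝ} (hp : 0 ≤ p) (hq : 0 < q) (hy : h₀ < y)
    (hh : h ≤ h₀) (hslope : h₀ * √(p + (y - h₀) ^ 2) ≤ (y - h₀) * √(q + h₀ ^ 2)) :
    √(p + (y - h₀) ^ 2) + √(q + h₀ ^ 2) ≤ √(p + (y - h) ^ 2) + √(q + h ^ 2) := by
  have hR₀ : 0 < √(p + (y - h₀) ^ 2) := sqrt_pos.2 (by positivity)
  have hS₀ : 0 < √(q + h₀ ^ 2) := sqrt_pos.2 (by positivity)
  have hR := add_mul_le_sqrt_mul_sqrt hp (y - h) (y - h₀)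
  have hS := add_mul_le_sqrt_mul_sqrt hq.le h h₀
  have hR₀2 : √(p + (y - h₀) ^ 2) ^ 2 = p + (y - h₀) ^ 2 := sq_sqrt (by positivity)
  have hS₀2 : √(q + h₀ ^ 2) ^ 2 = q + h₀ ^ 2 := sq_sqrt (by positivity)
  refine le_of_mul_le_mul_right ?_ (mul_pos hR₀ hS₀)
  nlinarith [mul_le_mul_of_nonneg_right hR hS₀.le, mul_le_mul_of_nonneg_right hS hR₀.le,
    mul_nonneg (sub_nonneg.2 hh) (sub_nonneg.2 hslope)]

/-- `f` at the point `(0, h)` in coordinates where `B = (-a/2, 0)`, `C = (a/2, 0)`, `A = (d, y)`. -/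
noncomputable def bisectorCost (a b d y h : ℝ) : ℝ :=
  max (2 * √((a / 2) ^ 2 + h ^ 2) / a) ((√(d ^ 2 + (y - h) ^ 2) + √((a / 2) ^ 2 + h ^ 2)) / b)

section
variable {a b d y t : ℝ}

theorem sqrt_sq_add_sq_mul (ha : 0 ≤ a) (t : ℝ) :
    √((a / 2) ^ 2 + (a * t / 2) ^ 2) = a / 2 * √(1 + t ^ 2) := by
  rw [show (a / 2) ^ 2 + (a * t / 2) ^ 2 = (a / 2) ^ 2 * (1 + t ^ 2) by ring,
    sqrt_mul (by positivity), sqrt_sq (by positivity)]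

theorem bisectorCost_eq (ha : 0 < a) (hab : a ≤ b)
    (hopt : d ^ 2 + (y - a * t / 2) ^ 2 = ((2 * b - a) / 2) ^ 2 * (1 + t ^ 2)) :
    bisectorCost a b d y (a * t / 2) = √(1 + t ^ 2) := by
  have hb : 0 < b := ha.trans_le hab
  rw [bisectorCost, sqrt_sq_add_sq_mul ha.le, hopt, sqrt_mul (by positivity),
    sqrt_sq (by linarith)]
  have hleft : 2 * (a / 2 * √(1 + t ^ 2)) / a = √(1 + t ^ 2) := by field_simp
  have hright : ((2 * b - a) / 2 * √(1 + t ^ 2) + a / 2 * √(1 + t ^ 2)) / b = √(1 + t ^ 2) := by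
    field_simp; ring
  rw [hleft, hright, max_self]

theorem sqrt_one_add_sq_le_bisectorCost (ha : 0 < a) (hab : a ≤ b) (ht : 0 < t) (hbt : b * t ≤ y)
    (hopt : d ^ 2 + (y - a * t / 2) ^ 2 = ((2 * b - a) / 2) ^ 2 * (1 + t ^ 2)) (h : ℝ) :
    √(1 + t ^ 2) ≤ bisectorCost a b d y h := by
  have hb : 0 < b := ha.trans_le hab
  rcases le_or_gt (a / 2 * √(1 + t ^ 2)) √((a / 2) ^ 2 + h ^ 2) with hfar | hnear
  · refine le_max_of_le_left ?_
    rw [le_div_iff₀ ha]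
    linarith
  · refine le_max_of_le_right ?_
    rw [le_div_iff₀ hb]
    have hh : h ≤ a * t / 2 := by
      rw [← sqrt_sq_add_sq_mul ha.le] at hnear
      have := (sqrt_lt_sqrt_iff (by positivity)).1 hnear
      nlinarith [mul_pos ha ht]
    have hAD : √(d ^ 2 + (y - a * t / 2) ^ 2) = (2 * b - a) / 2 * √(1 + t ^ 2) := by
      rw [hopt, sqrt_mul (by positivity), sqrt_sq (by linarith)]
    have hslope : a * t / 2 * √(d ^ 2 + (y - a * t / 2) ^ 2) ≤
        (y - a * t / 2) * √((a / 2) ^ 2 + (a * t / 2) ^ 2) := by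
      rw [hAD, sqrt_sq_add_sq_mul ha.le]
      nlinarith [mul_nonneg (mul_nonneg ha.le (sqrt_nonneg (1 + t ^ 2))) (sub_nonneg.2 hbt)]
    have hmin := sqrt_add_sqrt_le_of_le (sq_nonneg d) (by positivity : 0 < (a / 2) ^ 2)
      (by nlinarith : a * t / 2 < y) hh hslope
    rw [hAD, sqrt_sq_add_sq_mul ha.le] at hmin
    linarith
end

noncomputable def tanPhiStar (a b c : ℝ) : ℝ :=
  2 * √(c ^ 2 - (b - a) ^ 2) / (√((3 * b - a) ^ 2 - c ^ 2) + √((b + a) ^ 2 - c ^ 2))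

section
variable {a b c d y : ℝ}

theorem two_mul_mul_eq_sqrt_mul_sqrt (ha : 0 ≤ a) (hy : 0 ≤ y) (hab : a ≤ b) (hbc : b ≤ c)
    (hb2 : b ^ 2 = (d - a / 2) ^ 2 + y ^ 2) (hc2 : c ^ 2 = (d + a / 2) ^ 2 + y ^ 2) :
    2 * a * y = √(c ^ 2 - (b - a) ^ 2) * √((b + a) ^ 2 - c ^ 2) := by
  have heron : (c ^ 2 - (b - a) ^ 2) * ((b + a) ^ 2 - c ^ 2) = (2 * a * y) ^ 2 := by
    linear_combination (2 * a ^ 2 + c ^ 2 - b ^ 2 + 2 * a * d) * hb2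
      - (c ^ 2 - b ^ 2 + 2 * a * d - 2 * a ^ 2) * hc2
  rw [← sqrt_mul (by nlinarith), heron, sqrt_sq (by positivity)]

theorem tanPhiStar_pos (ha : 0 < a) (hab : a ≤ b) (hbc : b ≤ c)
    (hkey : c ^ 2 < 2 * a * b + b ^ 2 - a ^ 2) : 0 < tanPhiStar a b c := by
  have hY : 0 < (b + a) ^ 2 - c ^ 2 := by nlinarith
  unfold tanPhiStar
  have : 0 < √(c ^ 2 - (b - a) ^ 2) := sqrt_pos.2 (by nlinarith)
  have : 0 < √((b + a) ^ 2 - c ^ 2) := sqrt_pos.2 hY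
  positivity

theorem tanPhiStar_quadratic (ha : 0 < a) (hy : 0 ≤ y) (hab : a ≤ b) (hbc : b ≤ c)
    (hkey : c ^ 2 < 2 * a * b + b ^ 2 - a ^ 2)
    (hb2 : b ^ 2 = (d - a / 2) ^ 2 + y ^ 2) (hc2 : c ^ 2 = (d + a / 2) ^ 2 + y ^ 2) :
    b * (b - a) * tanPhiStar a b c ^ 2 + a * y * tanPhiStar a b c = (c ^ 2 - (b - a) ^ 2) / 2 := by
  have hay := two_mul_mul_eq_sqrt_mul_sqrt ha.le hy hab hbc hb2 hc2
  have hY : 0 < (b + a) ^ 2 - c ^ 2 := by nlinarith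
  have hX : 0 < (3 * b - a) ^ 2 - c ^ 2 := by nlinarith
  set t := tanPhiStar a b c
  set p := √(c ^ 2 - (b - a) ^ 2)
  set u := √((3 * b - a) ^ 2 - c ^ 2)
  set v := √((b + a) ^ 2 - c ^ 2)
  have hp2 : p ^ 2 = c ^ 2 - (b - a) ^ 2 := sq_sqrt (by nlinarith)
  have hu2 : u ^ 2 = (3 * b - a) ^ 2 - c ^ 2 := sq_sqrt hX.le
  have hv2 : v ^ 2 = (b + a) ^ 2 - c ^ 2 := sq_sqrt hY.le
  have huv : 0 < u + v := by positivity
  have htuv : t * (u + v) = 2 * p := div_mul_cancel₀ _ huv.ne'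
  refine mul_right_cancel₀ (pow_pos huv 2).ne' ?_
  linear_combination (b * (b - a) * (t * (u + v) + 2 * p) + (u + v) * a * y) * htuv
    + (u + v) * p * hay + (4 * b * (b - a) + u * v + v ^ 2) * hp2
    + (c ^ 2 - (b - a) ^ 2) / 2 * (hv2 - hu2)

theorem mul_tanPhiStar_le (ha : 0 < a) (hy : 0 ≤ y) (hab : a ≤ b) (hbc : b ≤ c)
    (hkey : c ^ 2 < 2 * a * b + b ^ 2 - a ^ 2)
    (hb2 : b ^ 2 = (d - a / 2) ^ 2 + y ^ 2) (hc2 : c ^ 2 = (d + a / 2) ^ 2 + y ^ 2) :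
    b * tanPhiStar a b c ≤ y := by
  have hay := two_mul_mul_eq_sqrt_mul_sqrt ha.le hy hab hbc hb2 hc2
  have hY : 0 < (b + a) ^ 2 - c ^ 2 := by nlinarith
  have hX : 0 < (3 * b - a) ^ 2 - c ^ 2 := by nlinarith
  set t := tanPhiStar a b c
  set p := √(c ^ 2 - (b - a) ^ 2)
  set u := √((3 * b - a) ^ 2 - c ^ 2)
  set v := √((b + a) ^ 2 - c ^ 2)
  have hv2 : v ^ 2 = (b + a) ^ 2 - c ^ 2 := sq_sqrt hY.le
  have huv : 0 < u + v := by positivity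
  have htuv : t * (u + v) = 2 * p := div_mul_cancel₀ _ huv.ne'
  -- `((3b - a)² - c²) ((b + a)² - c²) - (c² - (b - a)²)² = 8 b² (2ab + b² - a² - c²)`
  have hPuv : c ^ 2 - (b - a) ^ 2 ≤ u * v := by
    rw [← sqrt_mul hX.le]
    exact (le_abs_self _).trans (abs_le_sqrt (by nlinarith [mul_pos (mul_pos ha ha) ha]))
  refine le_of_mul_le_mul_right ?_ (mul_pos (mul_pos two_pos ha) huv)
  calc b * t * (2 * a * (u + v)) = p * (c ^ 2 - (b - a) ^ 2 + v ^ 2) := by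
        linear_combination 2 * a * b * htuv - p * hv2
    _ ≤ p * (u * v + v ^ 2) := by gcongr
    _ = y * (2 * a * (u + v)) := by linear_combination -(u + v) * hay

theorem sq_add_sq_sub_mul_tanPhiStar (ha : 0 < a) (hy : 0 ≤ y) (hab : a ≤ b) (hbc : b ≤ c)
    (hkey : c ^ 2 < 2 * a * b + b ^ 2 - a ^ 2)
    (hb2 : b ^ 2 = (d - a / 2) ^ 2 + y ^ 2) (hc2 : c ^ 2 = (d + a / 2) ^ 2 + y ^ 2) :
    d ^ 2 + (y - a * tanPhiStar a b c / 2) ^ 2 =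
      ((2 * b - a) / 2) ^ 2 * (1 + tanPhiStar a b c ^ 2) := by
  linear_combination -hb2 / 2 - hc2 / 2 - tanPhiStar_quadratic ha hy hab hbc hkey hb2 hc2
end

section
variable {V P : Type*} [NormedAddCommGroup V] [InnerProductSpace ℝ V] [MetricSpace P]
  [NormedAddTorsor V P]

theorem dist_sq_lt_of_sin_lt_tan {A B C : P} (hncol : ¬ Collinear ℝ ({A, B, C} : Set P))
    (hbc : dist A C ≤ dist A B) (h : sin (∠ B C A) < tan (∠ A B C)) :
    dist A B ^ 2 < 2 * dist B C * dist A C + dist A C ^ 2 - dist B C ^ 2 := by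
  have hcos := law_cos A B C
  have hsin := law_sin B C A
  rw [dist_comm C B] at hcos
  rw [dist_comm C A] at hsin
  have hsinγ : 0 < sin (∠ B C A) := sin_pos_of_not_collinear (by
    rwa [Set.insert_comm, Set.pair_comm] at hncol)
  have ha : 0 < dist B C := dist_pos.2 (ne₂₃_of_not_collinear hncol)
  have hc : 0 < dist A B := dist_pos.2 (ne₁₂_of_not_collinear hncol)
  have hcosβ : 0 < cos (∠ A B C) := by
    by_contra! hneg
    nlinarith [mul_nonneg (mul_pos hc ha).le (neg_nonneg.2 hneg), dist_nonneg (x := A) (y := C)]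
  rw [tan_eq_sin_div_cos, lt_div_iff₀ hcosβ] at h
  -- multiply by `dist A B` and use the law of sines `sin γ * dist A C = sin β * dist A B`
  have hproj : dist A B * cos (∠ A B C) < dist A C := by
    refine lt_of_mul_lt_mul_left ?_ hsinγ.le
    nlinarith [mul_lt_mul_of_pos_right h hc]
  nlinarith [mul_lt_mul_of_pos_left hproj (mul_pos two_pos ha)]
end

section
variable {E : Type*} [NormedAddCommGroup E] [InnerProductSpace ℝ E] {A B C : E}

theorem midpoint_add_smul_sub_mem_line (x : ℝ) :
    midpoint ℝ B C + x • (C - B) ∈ line[ℝ, B, C] := by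
  convert AffineMap.lineMap_mem_affineSpan_pair (1 / 2 + x) B C using 1
  rw [AffineMap.lineMap_apply, midpoint_eq_smul_add, vsub_eq_sub, vadd_eq_add]
  simp only [invOf_eq_inv]
  module

structure BisectorFrame (A B C : E) where
  e₁ : E
  e₂ : E
  d : ℝ
  y : ℝ
  norm_e₁ : ‖e₁‖ = 1
  norm_e₂ : ‖e₂‖ = 1
  inner_e₁_e₂ : ⟪e₁, e₂⟫ = 0
  y_pos : 0 < y
  right_sub_left : C - B = dist B C • e₁
  sub_midpoint : A - midpoint ℝ B C = d • e₁ + y • e₂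

namespace BisectorFrame

theorem nonempty (hBC : B ≠ C) (hA : A ∉ line[ℝ, B, C]) : Nonempty (BisectorFrame A B C) := by
  have ha : 0 < dist B C := dist_pos.2 hBC
  obtain ⟨e₁, he₁⟩ : ∃ e₁ : E, e₁ = (dist B C)⁻¹ • (C - B) := ⟨_, rfl⟩
  have hCB : C - B = dist B C • e₁ := by rw [he₁, smul_inv_smul₀ ha.ne']
  have hne₁ : ‖e₁‖ = 1 := by
    rw [he₁, norm_smul, norm_inv, Real.norm_of_nonneg ha.le, ← dist_eq_norm',
      inv_mul_cancel₀ ha.ne']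
  obtain ⟨w, hw⟩ : ∃ w : E, w = A - midpoint ℝ B C - ⟪e₁, A - midpoint ℝ B C⟫ • e₁ := ⟨_, rfl⟩
  have hw0 : w ≠ 0 := by
    intro hw0
    refine hA ?_
    convert midpoint_add_smul_sub_mem_line (⟪e₁, A - midpoint ℝ B C⟫ / dist B C) using 1
    rw [hCB, smul_smul, div_mul_cancel₀ _ ha.ne']
    linear_combination (norm := module) -hw + hw0
  have hy : 0 < ‖w‖ := norm_pos_iff.2 hw0
  refine ⟨⟨e₁, ‖w‖⁻¹ • w, ⟪e₁, A - midpoint ℝ B C⟫, ‖w‖, hne₁, ?_, ?_, hy, hCB, ?_⟩⟩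
  · rw [norm_smul, norm_inv, norm_norm, inv_mul_cancel₀ hy.ne']
  · rw [inner_smul_right, hw, inner_sub_right (y := A - midpoint ℝ B C), inner_smul_right,
      real_inner_self_eq_norm_sq, hne₁]
    ring
  · rw [smul_inv_smul₀ hy.ne']
    linear_combination (norm := module) -hw

variable (F : BisectorFrame A B C)

noncomputable def point (h : ℝ) : E := midpoint ℝ B C + h • F.e₂

theorem dist_eq_sqrt {X Y : E} {x z x' z' : ℝ}
    (hX : X - midpoint ℝ B C = x • F.e₁ + z • F.e₂)
    (hY : Y - midpoint ℝ B C = x' • F.e₁ + z' • F.e₂) :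
    dist X Y = √((x - x') ^ 2 + (z - z') ^ 2) := by
  rw [dist_eq_norm, show X - Y = (x - x') • F.e₁ + (z - z') • F.e₂ by
      linear_combination (norm := module) hX - hY,
    ← sqrt_sq (norm_nonneg _), norm_add_sq_real, norm_smul, norm_smul, inner_smul_left,
    inner_smul_right, F.inner_e₁_e₂, F.norm_e₁, F.norm_e₂]
  simp [sq_abs]

theorem left_sub_midpoint : B - midpoint ℝ B C = (-(dist B C / 2)) • F.e₁ + (0 : ℝ) • F.e₂ := by
  rw [midpoint_eq_smul_add, invOf_eq_inv]
  linear_combination (norm := module) (-(1 / 2) : ℝ) • F.right_sub_left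

theorem right_sub_midpoint : C - midpoint ℝ B C = (dist B C / 2) • F.e₁ + (0 : ℝ) • F.e₂ := by
  rw [midpoint_eq_smul_add, invOf_eq_inv]
  linear_combination (norm := module) ((1 / 2) : ℝ) • F.right_sub_left

theorem point_sub_midpoint (h : ℝ) : F.point h - midpoint ℝ B C = (0 : ℝ) • F.e₁ + h • F.e₂ := by
  simp [point]

theorem dist_left : dist A B = √((F.d + dist B C / 2) ^ 2 + F.y ^ 2) := by
  rw [F.dist_eq_sqrt F.sub_midpoint F.left_sub_midpoint]
  ring_nf

theorem dist_right : dist A C = √((F.d - dist B C / 2) ^ 2 + F.y ^ 2) := by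
  rw [F.dist_eq_sqrt F.sub_midpoint F.right_sub_midpoint]
  ring_nf

theorem dist_point_left (h : ℝ) : dist (F.point h) B = √((dist B C / 2) ^ 2 + h ^ 2) := by
  rw [F.dist_eq_sqrt (F.point_sub_midpoint h) F.left_sub_midpoint]
  ring_nf

theorem dist_point_right (h : ℝ) : dist (F.point h) C = √((dist B C / 2) ^ 2 + h ^ 2) := by
  rw [F.dist_eq_sqrt (F.point_sub_midpoint h) F.right_sub_midpoint]
  ring_nf

theorem dist_point (h : ℝ) : dist A (F.point h) = √(F.d ^ 2 + (F.y - h) ^ 2) := by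
  rw [F.dist_eq_sqrt F.sub_midpoint (F.point_sub_midpoint h)]
  ring_nf

theorem dist_point_midpoint (h : ℝ) : dist (F.point h) (midpoint ℝ B C) = |h| := by
  rw [dist_eq_norm, point, add_sub_cancel_left, norm_smul, F.norm_e₂, mul_one, Real.norm_eq_abs]

theorem midpoint_add_smul_mem (hBC : B ≠ C) (x : ℝ) : midpoint ℝ B C + x • F.e₁ ∈ line[ℝ, B, C] := by
  convert midpoint_add_smul_sub_mem_line (B := B) (C := C) (x / dist B C) using 2
  rw [F.right_sub_left, smul_smul, div_mul_cancel₀ _ (dist_ne_zero.2 hBC)]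

theorem sSameSide_point (hBC : B ≠ C) (hA : A ∉ line[ℝ, B, C]) {h : ℝ} (hh : 0 < h) :
    line[ℝ, B, C].SSameSide A (F.point h) := by
  have hfoot : A - (midpoint ℝ B C + F.d • F.e₁) = F.y • F.e₂ := by
    linear_combination (norm := module) F.sub_midpoint
  have := AffineSubspace.sSameSide_smul_vsub_vadd_right hA (F.midpoint_add_smul_mem hBC F.d)
    (AffineMap.lineMap_mem_affineSpan_pair (⅟2 : ℝ) B C) (div_pos hh F.y_pos)
  rwa [vsub_eq_sub, hfoot, smul_smul, div_mul_cancel₀ _ F.y_pos.ne', vadd_eq_add, add_comm] at this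

theorem exists_eq_point [Fact (Module.finrank ℝ E = 2)] (hBC : B ≠ C) {D : E}
    (hD : dist D B = dist D C) : ∃ h, D = F.point h := by
  have hperp := AffineSubspace.mem_perpBisector_iff_inner_eq_zero.1
    (AffineSubspace.mem_perpBisector_iff_dist_eq.2 hD)
  rw [vsub_eq_sub, vsub_eq_sub, F.right_sub_left, inner_smul_right,
    mul_eq_zero, or_iff_right (dist_ne_zero.2 hBC), real_inner_comm] at hperp
  have hne (e : E) (he : ‖e‖ = 1) : e ≠ 0 := norm_ne_zero_iff.1 (he ▸ one_ne_zero)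
  obtain ⟨h, hh⟩ := Submodule.mem_span_singleton.1
    (Submodule.mem_span_singleton_of_inner_eq_zero_of_inner_eq_zero (hne _ F.norm_e₁)
      (hne _ F.norm_e₂) hperp F.inner_e₁_e₂)
  exact ⟨h, by rw [point, hh, add_sub_cancel]⟩

end BisectorFrame
end

theorem gather_three_one_byzantine_tan_gt_sin
    (A B C : EuclideanSpace ℝ (Fin 2))
    (hncol : ¬ Collinear ℝ ({A, B, C} : Set (EuclideanSpace ℝ (Fin 2))))
    (a b c : ℝ) (ha : a = dist B C) (hb : b = dist A C) (hc : c = dist A B)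
    (hab : a ≤ b) (hbc : b ≤ c)
    (β γ : ℝ) (hβ : β = ∠ A B C) (hγ : γ = ∠ B C A)
    (f : EuclideanSpace ℝ (Fin 2) → ℝ)
    (hf : ∀ D, f D = max (2 * dist B D / a) ((dist A D + dist B D) / b))
    (h : Real.sin γ < Real.tan β) :
    ∃ φ ∈ Set.Ioo (0 : ℝ) (Real.pi / 2),
      Real.tan φ = 2 * Real.sqrt (c ^ 2 - (b - a) ^ 2) /
        (Real.sqrt ((3 * b - a) ^ 2 - c ^ 2) + Real.sqrt ((b + a) ^ 2 - c ^ 2)) ∧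
      ∃ Dstar : EuclideanSpace ℝ (Fin 2),
        dist Dstar B = dist Dstar C ∧
        dist Dstar (midpoint ℝ B C) = (a / 2) * Real.tan φ ∧
        line[ℝ, B, C].SSameSide A Dstar ∧
        f Dstar = 1 / Real.cos φ ∧
        ∀ D : EuclideanSpace ℝ (Fin 2), dist D B = dist D C →
          1 / Real.cos φ ≤ f D := by
  have hBC : B ≠ C := ne₂₃_of_not_collinear hncol
  have hA : A ∉ line[ℝ, B, C] := fun hA => hncol (collinear_insert_of_mem_affineSpan_pair hA)
  have : Fact (Module.finrank ℝ (EuclideanSpace ℝ (Fin 2)) = 2) := ⟨finrank_euclideanSpace_fin⟩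
  obtain ⟨F⟩ := BisectorFrame.nonempty hBC hA
  have ha0 : 0 < a := ha ▸ dist_pos.2 hBC
  have hb2 : b ^ 2 = (F.d - a / 2) ^ 2 + F.y ^ 2 := by
    rw [hb, F.dist_right, ← ha, sq_sqrt (by positivity)]
  have hc2 : c ^ 2 = (F.d + a / 2) ^ 2 + F.y ^ 2 := by
    rw [hc, F.dist_left, ← ha, sq_sqrt (by positivity)]
  have hkey : c ^ 2 < 2 * a * b + b ^ 2 - a ^ 2 := by
    subst ha hb hc hβ hγ
    exact dist_sq_lt_of_sin_lt_tan hncol hbc h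
  have hy := F.y_pos.le
  set t := tanPhiStar a b c
  have ht := tanPhiStar_pos ha0 hab hbc hkey
  have hopt := sq_add_sq_sub_mul_tanPhiStar ha0 hy hab hbc hkey hb2 hc2
  have hsec : 1 / cos (arctan t) = √(1 + t ^ 2) := by rw [cos_arctan, one_div_one_div]
  have hfD (h : ℝ) : f (F.point h) = bisectorCost a b F.d F.y h := by
    rw [hf, dist_comm B, F.dist_point_left, F.dist_point, ← ha, bisectorCost]
  refine ⟨arctan t, ⟨arctan_pos.2 ht, arctan_lt_pi_div_two t⟩, tan_arctan t, F.point (a * t / 2),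
    by rw [F.dist_point_left, F.dist_point_right], ?_, F.sSameSide_point hBC hA (by positivity),
    ?_, ?_⟩
  · rw [F.dist_point_midpoint, abs_of_pos (by positivity), tan_arctan]
    ring
  · rw [hsec, hfD, bisectorCost_eq ha0 hab hopt]
  · intro D hD
    obtain ⟨h, rfl⟩ := F.exists_eq_point hBC hD
    rw [hsec, hfD]
    exact sqrt_one_add_sq_le_bisectorCost ha0 hab ht
      (mul_tanPhiStar_le ha0 hy hab hbc hkey hb2 hc2) hopt h
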